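/- For 0 < σ < 1 < θ, the function w_{σ,θ} is Hölder continuous of order σ with constant 2: |w_{σ,θ}(x) − w_{σ,θ}(y)| ≤ 2|x−y|^σ for all x, y ∈ ℝ. -/

import Mathlib

open MeasureTheory Real Set

noncomputable def zetaR (θ : ℝ) : ℝ := ∑' n : ℕ, ((n : ℝ) + 1) ^ (-θ)

noncomputable def aSeq (θ : ℝ) (n : ℕ) : ℝ :=
  4 * ∑ j ∈ Finset.Icc 1 (n - 1), (j : ℝ) ^ (-θ)

noncomputable def wPiece (σ θ : ℝ) (n : ℕ) (ξ : ℝ) : ℝ :=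
  if ξ < aSeq θ n + (n : ℝ) ^ (-θ) then (ξ - aSeq θ n) ^ σ
  else if ξ < aSeq θ n + 2 * (n : ℝ) ^ (-θ) then (n : ℝ) ^ (-(θ * σ))
  else if ξ < aSeq θ n + 3 * (n : ℝ) ^ (-θ) then (aSeq θ n + 3 * (n : ℝ) ^ (-θ) - ξ) ^ σ
  else 0

open Classical in
noncomputable def wFn (σ θ : ℝ) (ξ : ℝ) : ℝ :=
  if h : ∃ n : ℕ, 2 ≤ n ∧ aSeq θ n ≤ ξ ∧ ξ < aSeq θ (n + 1) then wPiece σ θ h.choose ξ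
  else 0

/-!
Each bump of `w_{σ,θ}` is the `σ`-th power of a trapezoid of slope `±1`, so `w_{σ,θ} = g ^ σ`
where `g` is the train of these trapezoids. The trapezoid of the block `[a_n, a_{n+1})` vanishes
at both ends of the block, hence `g` is `1`-Lipschitz. Subadditivity of `t ↦ t ^ σ` on `[0, ∞)`
gives `|s ^ σ - t ^ σ| ≤ |s - t| ^ σ`, so `w_{σ,θ}` is even `σ`-Hölder with constant `1`.
-/

noncomputable def trapezoid (a h ξ : ℝ) : ℝ :=
  max 0 (min (ξ - a) (min h (a + 3 * h - ξ)))

open Classical in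
noncomputable def trapezoidTrain (θ ξ : ℝ) : ℝ :=
  if h : ∃ n : ℕ, 2 ≤ n ∧ aSeq θ n ≤ ξ ∧ ξ < aSeq θ (n + 1) then
    trapezoid (aSeq θ h.choose) ((h.choose : ℝ) ^ (-θ)) ξ
  else 0

section Trapezoid

variable {a h ξ : ℝ}

lemma trapezoid_nonneg (a h ξ : ℝ) : 0 ≤ trapezoid a h ξ := le_max_left _ _

lemma lipschitzWith_trapezoid (a h : ℝ) : LipschitzWith 1 (trapezoid a h) := by
  have hleft : LipschitzWith 1 (fun ξ : ℝ => ξ - a) :=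
    LipschitzWith.of_dist_le_mul fun x y => by rw [dist_sub_right, NNReal.coe_one, one_mul]
  have hright : LipschitzWith 1 (fun ξ : ℝ => a + 3 * h - ξ) :=
    LipschitzWith.of_dist_le_mul fun x y => by rw [dist_sub_left, NNReal.coe_one, one_mul]
  have := (hleft.min (hright.const_min h)).const_max 0
  rw [max_self] at this
  exact this

lemma trapezoid_le_sub_left (hξ : a ≤ ξ) : trapezoid a h ξ ≤ ξ - a :=
  max_le (sub_nonneg.2 hξ) (min_le_left _ _)

lemma trapezoid_le_sub_right (hh : 0 ≤ h) (hξ : ξ ≤ a + 4 * h) :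
    trapezoid a h ξ ≤ a + 4 * h - ξ :=
  max_le (by linarith) ((min_le_right _ _).trans ((min_le_right _ _).trans (by linarith)))

lemma trapezoid_eq_zero (hξ : a + 3 * h ≤ ξ) : trapezoid a h ξ = 0 :=
  max_eq_left ((min_le_right _ _).trans ((min_le_right _ _).trans (by linarith)))

end Trapezoid

lemma wPiece_eq_trapezoid_rpow {σ θ ξ : ℝ} {n : ℕ} (hσ : σ ≠ 0) (hξ : aSeq θ n ≤ ξ) :
    wPiece σ θ n ξ = trapezoid (aSeq θ n) ((n : ℝ) ^ (-θ)) ξ ^ σ := by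
  have hh : 0 ≤ (n : ℝ) ^ (-θ) := rpow_nonneg n.cast_nonneg _
  unfold wPiece
  split_ifs with h₁ h₂ h₃
  · congr 1
    simp only [trapezoid]
    grind
  · rw [neg_mul_eq_neg_mul, rpow_mul n.cast_nonneg]
    congr 1
    simp only [trapezoid]
    grind
  · congr 1
    simp only [trapezoid]
    grind
  · rw [trapezoid_eq_zero (by linarith), zero_rpow hσ]

section Blocks

variable {θ : ℝ}

lemma aSeq_mono (θ : ℝ) : Monotone (aSeq θ) := fun n m hnm => by
  unfold aSeq
  gcongr

lemma aSeq_succ (θ : ℝ) {n : ℕ} (hn : 1 ≤ n) :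
    aSeq θ (n + 1) = aSeq θ n + 4 * (n : ℝ) ^ (-θ) := by
  obtain ⟨m, rfl⟩ := Nat.exists_eq_add_of_le' hn
  simp only [aSeq, Nat.add_sub_cancel, Finset.sum_Icc_succ_top (by omega : 1 ≤ m + 1)]
  push_cast
  ring

lemma eq_of_mem_block {n m : ℕ} {ξ : ℝ}
    (hn : 2 ≤ n ∧ aSeq θ n ≤ ξ ∧ ξ < aSeq θ (n + 1))
    (hm : 2 ≤ m ∧ aSeq θ m ≤ ξ ∧ ξ < aSeq θ (m + 1)) : n = m := by
  by_contra hne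
  rcases Nat.lt_or_gt_of_ne hne with h | h
  · exact (hn.2.2.trans_le ((aSeq_mono θ h).trans hm.2.1)).false
  · exact (hm.2.2.trans_le ((aSeq_mono θ h).trans hn.2.1)).false

lemma wFn_of_mem_block (σ : ℝ) {n : ℕ} {ξ : ℝ}
    (h : 2 ≤ n ∧ aSeq θ n ≤ ξ ∧ ξ < aSeq θ (n + 1)) :
    wFn σ θ ξ = wPiece σ θ n ξ := by
  have hex : ∃ n : ℕ, 2 ≤ n ∧ aSeq θ n ≤ ξ ∧ ξ < aSeq θ (n + 1) := ⟨n, h⟩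
  rw [wFn, dif_pos hex, eq_of_mem_block hex.choose_spec h]

lemma trapezoidTrain_of_mem_block {n : ℕ} {ξ : ℝ}
    (h : 2 ≤ n ∧ aSeq θ n ≤ ξ ∧ ξ < aSeq θ (n + 1)) :
    trapezoidTrain θ ξ = trapezoid (aSeq θ n) ((n : ℝ) ^ (-θ)) ξ := by
  have hex : ∃ n : ℕ, 2 ≤ n ∧ aSeq θ n ≤ ξ ∧ ξ < aSeq θ (n + 1) := ⟨n, h⟩
  rw [trapezoidTrain, dif_pos hex, eq_of_mem_block hex.choose_spec h]

end Blocks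

lemma trapezoidTrain_nonneg (θ ξ : ℝ) : 0 ≤ trapezoidTrain θ ξ := by
  unfold trapezoidTrain
  split
  · exact trapezoid_nonneg _ _ _
  · exact le_rfl

lemma lipschitzWith_trapezoidTrain (θ : ℝ) : LipschitzWith 1 (trapezoidTrain θ) := by
  refine LipschitzWith.of_le_add fun x y => ?_
  rw [Real.dist_eq]
  have hy := trapezoidTrain_nonneg θ y
  have hxy := le_abs_self (x - y)
  have hyx := neg_abs_le (x - y)
  by_cases hx : ∃ n : ℕ, 2 ≤ n ∧ aSeq θ n ≤ x ∧ x < aSeq θ (n + 1)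
  · obtain ⟨n, hn⟩ := hx
    have hnext := aSeq_succ θ (by omega : 1 ≤ n)
    have hh : 0 ≤ (n : ℝ) ^ (-θ) := rpow_nonneg n.cast_nonneg _
    rw [trapezoidTrain_of_mem_block hn]
    by_cases hleft : y < aSeq θ n
    · linarith [trapezoid_le_sub_left (h := (n : ℝ) ^ (-θ)) hn.2.1]
    by_cases hright : aSeq θ (n + 1) ≤ y
    · linarith [trapezoid_le_sub_right hh (hnext ▸ hn.2.2).le]
    rw [trapezoidTrain_of_mem_block ⟨hn.1, not_lt.1 hleft, not_le.1 hright⟩]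
    simpa [Real.dist_eq] using (lipschitzWith_trapezoid _ _).le_add_mul x y
  · rw [trapezoidTrain, dif_neg hx]
    linarith [abs_nonneg (x - y)]

lemma wFn_eq_trapezoidTrain_rpow {σ : ℝ} (hσ : σ ≠ 0) (θ ξ : ℝ) :
    wFn σ θ ξ = trapezoidTrain θ ξ ^ σ := by
  by_cases hξ : ∃ n : ℕ, 2 ≤ n ∧ aSeq θ n ≤ ξ ∧ ξ < aSeq θ (n + 1)
  · obtain ⟨n, hn⟩ := hξ
    rw [wFn_of_mem_block σ hn, trapezoidTrain_of_mem_block hn,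
      wPiece_eq_trapezoid_rpow hσ hn.2.1]
  · rw [wFn, dif_neg hξ, trapezoidTrain, dif_neg hξ, zero_rpow hσ]

lemma abs_rpow_sub_rpow_le {s t σ : ℝ} (hs : 0 ≤ s) (ht : 0 ≤ t) (hσ₀ : 0 ≤ σ) (hσ₁ : σ ≤ 1) :
    |s ^ σ - t ^ σ| ≤ |s - t| ^ σ := by
  have key : ∀ {s t : ℝ}, 0 ≤ s → 0 ≤ t → s ^ σ ≤ t ^ σ + |s - t| ^ σ := fun {s t} hs ht =>
    calc s ^ σ ≤ (t + |s - t|) ^ σ := rpow_le_rpow hs (by linarith [le_abs_self (s - t)]) hσ₀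
      _ ≤ t ^ σ + |s - t| ^ σ := rpow_add_le_add_rpow ht (abs_nonneg _) hσ₀ hσ₁
  rw [abs_sub_le_iff]
  constructor
  · linarith [key hs ht]
  · linarith [key ht hs, show |t - s| ^ σ = |s - t| ^ σ by rw [abs_sub_comm]]

theorem stmt8_general (σ θ : ℝ) (hσ0 : 0 < σ) (hσ1 : σ < 1) :
    ∀ x y : ℝ, |wFn σ θ x - wFn σ θ y| ≤ 2 * |x - y| ^ σ := by
  intro x y
  set g := trapezoidTrain θ
  have hg : |g x - g y| ≤ |x - y| := by
    simpa [Real.dist_eq] using (lipschitzWith_trapezoidTrain θ).dist_le_mul x y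
  rw [wFn_eq_trapezoidTrain_rpow hσ0.ne', wFn_eq_trapezoidTrain_rpow hσ0.ne']
  calc |g x ^ σ - g y ^ σ| ≤ |g x - g y| ^ σ :=
        abs_rpow_sub_rpow_le (trapezoidTrain_nonneg θ x) (trapezoidTrain_nonneg θ y) hσ0.le hσ1.le
    _ ≤ |x - y| ^ σ := rpow_le_rpow (abs_nonneg _) hg hσ0.le
    _ ≤ 2 * |x - y| ^ σ := by linarith [rpow_nonneg (abs_nonneg (x - y)) σ]

/-- For 0 < σ < 1 < θ, w_{σ,θ} is σ-Hölder with constant 2: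
|w_{σ,θ}(x) − w_{σ,θ}(y)| ≤ 2|x−y|^σ. -/
theorem stmt8 (σ θ : ℝ) (hσ0 : 0 < σ) (hσ1 : σ < 1) (hθ : 1 < θ) :
    ∀ x y : ℝ, |wFn σ θ x - wFn σ θ y| ≤ 2 * |x - y| ^ σ :=
  stmt8_general σ θ hσ0 hσ1
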